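/- arXiv:1311.6201 — 7 statements merged into one kernel-verified Lean document; each statement's English description precedes it below -/
import Mathlib

section
/- There is no finite group G with |Cent(G)| = 3. -/
/-!
The whole group is the centralizer of `1`. If exactly two further centralizers `H` and `K`
existed, every element `x` would lie in `H` or `K`: in its own centralizer when that is proper,
and otherwise in the centre, which is contained in every centralizer. But a group is never the
union of two proper subgroups.
-/

/-- The set of distinct centralizers of elements of `G`. -/
def Cent (G : Type*) [Group G] : Set (Subgroup G) :=
  Set.range fun x : G => Subgroup.centralizer {x}

namespace Subgroup

variable {G : Type*} [Group G]

theorem eq_top_or_eq_top_of_forall_mem_or_mem {H K : Subgroup G} (h : ∀ x, x ∈ H ∨ x ∈ K) :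
    H = ⊤ ∨ K = ⊤ := by
  simpa only [top_le_iff] using
    (SubgroupClass.subset_union (H := (⊤ : Subgroup G))).mp fun x _ => h x

theorem top_mem_cent : (⊤ : Subgroup G) ∈ Cent G :=
  ⟨1, by simp⟩

theorem center_le_of_mem_cent {H : Subgroup G} (hH : H ∈ Cent G) : center G ≤ H := by
  obtain ⟨y, rfl⟩ := hH
  exact center_le_centralizer _

theorem exists_mem_cent_diff_top_mem (hne : (Cent G \ {⊤}).Nonempty) (x : G) :
    ∃ H ∈ Cent G \ {⊤}, x ∈ H := by
  by_cases hx : centralizer {x} = ⊤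
  · obtain ⟨H, hH⟩ := hne
    exact ⟨H, hH, center_le_of_mem_cent hH.1 (centralizer_eq_top_iff_subset.mp hx rfl)⟩
  · exact ⟨centralizer {x}, ⟨⟨x, rfl⟩, hx⟩, mem_centralizer_singleton_iff.mpr rfl⟩

end Subgroup

open Subgroup in
theorem stmt2_general (G : Type*) [Group G] : (Cent G).ncard ≠ 3 := by
  intro h3
  obtain ⟨H, K, -, hs⟩ : ∃ H K, H ≠ K ∧ Cent G \ {⊤} = {H, K} :=
    Set.ncard_eq_two.mp (by rw [Set.ncard_sdiff_singleton_of_mem top_mem_cent, h3])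
  have cover (x : G) : x ∈ H ∨ x ∈ K := by
    obtain ⟨L, hL, hxL⟩ := exists_mem_cent_diff_top_mem (hs ▸ Set.insert_nonempty H {K}) x
    rw [hs] at hL
    rcases hL with rfl | rfl
    exacts [Or.inl hxL, Or.inr hxL]
  have hH : H ∈ Cent G \ {⊤} := by simp [hs]
  have hK : K ∈ Cent G \ {⊤} := by simp [hs]
  exact (eq_top_or_eq_top_of_forall_mem_or_mem cover).elim hH.2 hK.2

theorem stmt2 (G : Type*) [Group G] [Finite G] : (Cent G).ncard ≠ 3 :=
  stmt2_general G
end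

section
/- If G is a finite group and G/Z(G) is isomorphic to C7 × C7, then |Cent(G)| = 9. -/
open Subgroup Finset

theorem Nat.dvd_of_dvd_prime_sq_of_ne {p d : ℕ} (hp : p.Prime) (hd : d ∣ p ^ 2)
    (hne : d ≠ p ^ 2) : d ∣ p := by
  obtain ⟨m, hm, rfl⟩ := (Nat.dvd_prime_pow hp).1 hd
  have : m ≠ 2 := by rintro rfl; exact hne rfl
  simpa using pow_dvd_pow p (by omega : m ≤ 1)

namespace Subgroup

variable {Q : Type*} [Group Q] {p : ℕ}

theorem zpowers_eq_of_card_eq_prime (hp : p.Prime) (hexp : ∀ g : Q, g ^ p = 1)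
    {H : Subgroup Q} (hH : Nat.card H = p) {g : Q} (hgH : g ∈ H) (hg : g ≠ 1) :
    zpowers g = H := by
  have := Fact.mk hp
  have : Finite H := Nat.finite_of_card_ne_zero (hH ▸ hp.ne_zero)
  refine eq_of_le_of_card_ge (zpowers_le.2 hgH) ?_
  rw [Nat.card_zpowers, orderOf_eq_prime (hexp g) hg, hH]

theorem sub_one_mul_ncard_subgroups_card_eq_prime [Finite Q] (hp : p.Prime)
    (hexp : ∀ g : Q, g ^ p = 1) :
    (p - 1) * {H : Subgroup Q | Nat.card H = p}.ncard = Nat.card Q - 1 := by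
  classical
  have := Fact.mk hp
  have := Fintype.ofFinite Q
  have hS : {H : Subgroup Q | Nat.card H = p}.Finite := Set.toFinite _
  have hmaps : ((univ.erase (1 : Q) : Finset Q) : Set Q).MapsTo zpowers hS.toFinset := by
    intro g hg
    rw [mem_coe, Set.Finite.mem_toFinset]
    exact (Nat.card_zpowers g).trans (orderOf_eq_prime (hexp g) (mem_erase.1 hg).1)
  have hfiber : ∀ H ∈ hS.toFinset, #{g ∈ univ.erase (1 : Q) | zpowers g = H} = p - 1 := by
    intro H hH
    rw [Set.Finite.mem_toFinset] at hH
    have : ({g ∈ univ.erase (1 : Q) | zpowers g = H} : Finset Q) =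
        ({g | g ∈ H} : Finset Q).erase 1 := by
      ext g
      simp only [mem_filter, mem_erase, mem_univ, and_true, true_and]
      exact ⟨fun ⟨hg, hgH⟩ => ⟨hg, hgH ▸ mem_zpowers g⟩,
        fun ⟨hg, hgH⟩ => ⟨hg, zpowers_eq_of_card_eq_prime hp hexp hH hgH hg⟩⟩
    rw [this, card_erase_of_mem (by simp), ← hH, Nat.card_eq_fintype_card,
      Fintype.card_subtype]
  calc (p - 1) * {H : Subgroup Q | Nat.card H = p}.ncard
      = ∑ H ∈ hS.toFinset, #{g ∈ univ.erase 1 | zpowers g = H} := by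
        rw [sum_congr rfl hfiber, sum_const, smul_eq_mul, Set.ncard_eq_toFinset_card _ hS,
          mul_comm]
    _ = #(univ.erase (1 : Q)) := (card_eq_sum_card_fiberwise hmaps).symm
    _ = Nat.card Q - 1 := by rw [card_erase_of_mem (mem_univ _), card_univ,
        Nat.card_eq_fintype_card]

theorem card_dvd_prime_of_ne_top (hp : p.Prime) (hQ : Nat.card Q = p ^ 2) {K : Subgroup Q}
    (hK : K ≠ ⊤) : Nat.card K ∣ p := by
  have : Finite Q := Nat.finite_of_card_ne_zero (hQ ▸ pow_ne_zero 2 hp.ne_zero)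
  refine Nat.dvd_of_dvd_prime_sq_of_ne hp (hQ ▸ K.card_subgroup_dvd_card) ?_
  rwa [← hQ, Ne, card_eq_iff_eq_top]

end Subgroup

section CenterQuotient

variable {G : Type*} [Group G] {p : ℕ}

open QuotientGroup

theorem pow_eq_one_of_card_center_quotient_eq_sq (hp : p.Prime)
    (hQ : Nat.card (G ⧸ center G) = p ^ 2) (q : G ⧸ center G) : q ^ p = 1 := by
  rw [← orderOf_dvd_iff_pow_eq_one, ← Nat.card_zpowers]
  refine card_dvd_prime_of_ne_top hp hQ fun htop => ?_
  have : IsCyclic (G ⧸ center G) := isCyclic_iff_exists_zpowers_eq_top.2 ⟨q, htop⟩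
  have : IsMulCommutative G := isMulCommutative_of_isCyclic_quotient_center_self G
  have : (center G).index = 1 := index_eq_one.2 center_eq_top
  exact absurd (hQ.symm.trans this) (Nat.one_lt_pow two_ne_zero hp.one_lt).ne'

theorem card_zpowers_mk_of_notMem_center (hp : p.Prime)
    (hQ : Nat.card (G ⧸ center G) = p ^ 2) {x : G} (hx : x ∉ center G) :
    Nat.card (zpowers (x : G ⧸ center G)) = p := by
  have := Fact.mk hp
  rw [Nat.card_zpowers]
  exact orderOf_eq_prime (pow_eq_one_of_card_center_quotient_eq_sq hp hQ _)
    (by rwa [Ne, eq_one_iff])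

theorem centralizer_eq_comap_zpowers (hp : p.Prime) (hQ : Nat.card (G ⧸ center G) = p ^ 2)
    {x : G} (hx : x ∉ center G) :
    centralizer {x} = comap (mk' (center G)) (zpowers (x : G ⧸ center G)) := by
  have : Finite (G ⧸ center G) := Nat.finite_of_card_ne_zero (hQ ▸ pow_ne_zero 2 hp.ne_zero)
  have hker : (mk' (center G)).ker ≤ centralizer {x} := by
    rw [ker_mk']
    exact center_le_centralizer _
  have hproper : map (mk' (center G)) (centralizer {x}) ≠ ⊤ := fun htop => by
    have := comap_map_eq_self hker
    rw [htop, comap_top] at this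
    exact hx (centralizer_eq_top_iff_subset.1 this.symm (Set.mem_singleton x))
  have hzpowers : zpowers (x : G ⧸ center G) = map (mk' (center G)) (centralizer {x}) := by
    refine eq_of_le_of_card_ge (zpowers_le.2 ⟨x, mem_centralizer_singleton_iff.2 rfl, rfl⟩) ?_
    rw [card_zpowers_mk_of_notMem_center hp hQ hx]
    exact Nat.le_of_dvd hp.pos (card_dvd_prime_of_ne_top hp hQ hproper)
  rw [hzpowers, comap_map_eq_self hker]

theorem cent_eq_insert_top_image_comap (hp : p.Prime) (hQ : Nat.card (G ⧸ center G) = p ^ 2) :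
    Cent G = insert ⊤ (comap (mk' (center G)) '' {H | Nat.card H = p}) := by
  ext C
  constructor
  · rintro ⟨x, rfl⟩
    by_cases hx : x ∈ center G
    · exact Or.inl (centralizer_eq_top_iff_subset.2 (Set.singleton_subset_iff.2 hx))
    · exact Or.inr ⟨_, card_zpowers_mk_of_notMem_center hp hQ hx,
        (centralizer_eq_comap_zpowers hp hQ hx).symm⟩
  · rintro (rfl | ⟨H, hH, rfl⟩)
    · exact ⟨1, centralizer_eq_top_iff_subset.2 (by simp)⟩
    · obtain ⟨q, hqH, hq⟩ := H.bot_or_exists_ne_one.resolve_left fun hbot => by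
        simp [hbot, hp.ne_one.symm] at hH
      obtain ⟨x, rfl⟩ := mk_surjective q
      have hx : x ∉ center G := by rwa [← eq_one_iff]
      refine ⟨x, ?_⟩
      change centralizer {x} = _
      rw [centralizer_eq_comap_zpowers hp hQ hx, zpowers_eq_of_card_eq_prime hp
        (pow_eq_one_of_card_center_quotient_eq_sq hp hQ) hH hqH hq]

theorem ncard_cent_of_card_center_quotient_eq_sq (hp : p.Prime)
    (hQ : Nat.card (G ⧸ center G) = p ^ 2) : (Cent G).ncard = p + 2 := by
  have : Finite (G ⧸ center G) := Nat.finite_of_card_ne_zero (hQ ▸ pow_ne_zero 2 hp.ne_zero)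
  have htop : ⊤ ∉ comap (mk' (center G)) '' {H | Nat.card H = p} := by
    rintro ⟨H, hH, hcomap⟩
    rw [← comap_top (mk' (center G)), comap_injective (mk'_surjective _) |>.eq_iff] at hcomap
    rw [Set.mem_ofPred_eq, hcomap, card_top, hQ] at hH
    exact (lt_self_pow₀ hp.one_lt one_lt_two).ne' hH
  have hcount := sub_one_mul_ncard_subgroups_card_eq_prime hp
    (pow_eq_one_of_card_center_quotient_eq_sq hp hQ)
  rw [hQ] at hcount
  rw [cent_eq_insert_top_image_comap hp hQ, Set.ncard_insert_of_notMem htop (Set.toFinite _),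
    Set.ncard_image_of_injective _ (comap_injective (mk'_surjective _))]
  have hN : {H : Subgroup (G ⧸ center G) | Nat.card H = p}.ncard = p + 1 := by
    refine Nat.eq_of_mul_eq_mul_left (Nat.sub_pos_of_lt hp.one_lt) ?_
    rw [hcount, mul_comm, ← Nat.sq_sub_sq, one_pow]
  rw [hN]

end CenterQuotient

theorem stmt3_general (G : Type*) [Group G]
    (h : Nonempty ((G ⧸ Subgroup.center G) ≃* Multiplicative (ZMod 7 × ZMod 7))) :
    (Cent G).ncard = 9 := by
  obtain ⟨φ⟩ := h
  refine ncard_cent_of_card_center_quotient_eq_sq (p := 7) (by norm_num) ?_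
  rw [Nat.card_congr φ.toEquiv]
  simp

theorem stmt3 (G : Type*) [Group G] [Finite G]
    (h : Nonempty ((G ⧸ Subgroup.center G) ≃* Multiplicative (ZMod 7 × ZMod 7))) :
    (Cent G).ncard = 9 :=
  stmt3_general G h
end

section
/- If G is a finite group and G/Z(G) is isomorphic to the dihedral group D14 of order 14 (equivalently C7 ⋊ C2), then |Cent(G)| = 9. -/
open Subgroup

section Transfer

variable {G H : Type*} [Group G] [Group H]

theorem centralizer_eq_comap_centralizer (π : G →* H) (hker : π.ker ≤ center G)
    (hH : ∀ h : H, h ≠ 1 → IsCyclic (centralizer {h})) (x : G) :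
    centralizer {x} = comap π (centralizer {π x}) := by
  by_cases hx : π x = 1
  · rw [hx, centralizer_eq_top_iff_subset.mpr (Set.singleton_subset_iff.mpr (hker hx)),
      centralizer_eq_top_iff_subset.mpr (Set.singleton_subset_iff.mpr (one_mem _)), comap_top]
  · have := hH _ hx
    refine le_antisymm (fun y hy => ?_) fun y hy => ?_
    · rw [mem_comap, mem_centralizer_singleton_iff, ← map_mul, ← map_mul,
        mem_centralizer_singleton_iff.mp hy]
    · set K := comap π (centralizer {π x})
      let ψ : K →* centralizer {π x} := (π.comp K.subtype).codRestrict _ fun k => k.2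
      have hψ : ψ.ker ≤ center K := fun k hk =>
        mem_center_iff.mpr fun g => Subtype.ext <|
          mem_center_iff.mp (hker (congrArg Subtype.val (ψ.mem_ker.mp hk))) g
      have hxK : x ∈ K := mem_centralizer_singleton_iff.mpr rfl
      exact mem_centralizer_singleton_iff.mpr <| congrArg Subtype.val <|
        (ψ.isMulCommutative_of_isCyclic_of_ker_le_center hψ).is_comm.comm ⟨y, hy⟩ ⟨x, hxK⟩

theorem Cent_eq_image_comap (π : G →* H) (hπ : Function.Surjective π)
    (hker : π.ker ≤ center G) (hH : ∀ h : H, h ≠ 1 → IsCyclic (centralizer {h})) :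
    Cent G = comap π '' Cent H := by
  ext K
  constructor
  · rintro ⟨x, rfl⟩
    exact ⟨_, ⟨π x, rfl⟩, (centralizer_eq_comap_centralizer π hker hH x).symm⟩
  · rintro ⟨_, ⟨h, rfl⟩, rfl⟩
    obtain ⟨x, rfl⟩ := hπ h
    exact ⟨x, centralizer_eq_comap_centralizer π hker hH x⟩

theorem ncard_Cent_eq_of_surjective (π : G →* H) (hπ : Function.Surjective π)
    (hker : π.ker ≤ center G) (hH : ∀ h : H, h ≠ 1 → IsCyclic (centralizer {h})) :
    (Cent G).ncard = (Cent H).ncard := by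
  rw [Cent_eq_image_comap π hπ hker hH, Set.ncard_image_of_injective _ (comap_injective hπ)]

end Transfer

namespace DihedralGroup

variable {n : ℕ}

theorem commute_r_sr_iff (hn : Odd n) {i j : ZMod n} : Commute (r i) (sr j) ↔ i = 0 := by
  rw [commute_iff_eq, r_mul_sr, sr_mul_r, sr.injEq, ← ZMod.add_self_eq_zero_iff_eq_zero hn]
  constructor <;> intro h <;> linear_combination -h

theorem commute_sr_sr_iff (hn : Odd n) {i j : ZMod n} : Commute (sr i) (sr j) ↔ i = j := by
  rw [commute_iff_eq, sr_mul_sr, sr_mul_sr, r.injEq, ← sub_eq_zero (a := i),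
    ← ZMod.add_self_eq_zero_iff_eq_zero hn]
  constructor <;> intro h <;> linear_combination -h

theorem centralizer_r (hn : Odd n) {i : ZMod n} (hi : i ≠ 0) :
    centralizer {r i} = zpowers (r 1) := by
  ext (j | j) <;> rw [mem_centralizer_singleton_iff, mem_zpowers_iff]
  · simp only [r_mul_r, add_comm, r_one_zpow, true_iff]
    exact ⟨j.cast, by rw [ZMod.intCast_zmod_cast]⟩
  · simp only [r_one_zpow, reduceCtorEq, exists_false, iff_false]
    exact fun h => hi ((commute_r_sr_iff hn).mp h.symm)

theorem centralizer_sr (hn : Odd n) (i : ZMod n) : centralizer {sr i} = zpowers (sr i) := by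
  refine le_antisymm (fun x hx => ?_) (zpowers_le.mpr (mem_centralizer_singleton_iff.mpr rfl))
  rw [mem_centralizer_singleton_iff] at hx
  cases x with
  | r j => rw [(commute_r_sr_iff hn).mp hx, r_zero]; exact one_mem _
  | sr j => rw [(commute_sr_sr_iff hn).mp hx]; exact mem_zpowers _

theorem isCyclic_centralizer (hn : Odd n) :
    ∀ g : DihedralGroup n, g ≠ 1 → IsCyclic (centralizer {g})
  | r i, hg => by
    rw [centralizer_r hn fun hi => hg (by rw [hi, r_zero])]
    infer_instance
  | sr i, _ => by
    rw [centralizer_sr hn]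
    infer_instance

theorem Cent_eq (hn : Odd n) (hn1 : n ≠ 1) :
    Cent (DihedralGroup n) =
      insert ⊤ (insert (zpowers (r 1)) (Set.range fun i => zpowers (sr i))) := by
  have : Nontrivial (ZMod n) := ZMod.nontrivial_iff.mpr hn1
  ext K
  constructor
  · rintro ⟨i | i, rfl⟩
    · by_cases hi : i = 0
      · left
        rw [hi, r_zero, centralizer_eq_top_iff_subset, Set.singleton_subset_iff]
        exact one_mem _
      · exact Or.inr (Or.inl (centralizer_r hn hi))
    · exact Or.inr (Or.inr ⟨i, (centralizer_sr hn i).symm⟩)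
  · rintro (rfl | rfl | ⟨i, rfl⟩)
    · exact ⟨1, centralizer_eq_top_iff_subset.mpr (Set.singleton_subset_iff.mpr (one_mem _))⟩
    · exact ⟨r 1, centralizer_r hn one_ne_zero⟩
    · exact ⟨sr i, centralizer_sr hn i⟩

theorem sr_mem_zpowers_sr_iff (hn : Odd n) {i j : ZMod n} : sr j ∈ zpowers (sr i) ↔ j = i := by
  rw [← centralizer_sr hn, mem_centralizer_singleton_iff, ← commute_iff_eq,
    commute_sr_sr_iff hn]

theorem r_mem_zpowers_sr_iff (hn : Odd n) {i j : ZMod n} : r j ∈ zpowers (sr i) ↔ j = 0 := by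
  rw [← centralizer_sr hn, mem_centralizer_singleton_iff, ← commute_iff_eq, commute_r_sr_iff hn]

theorem sr_notMem_zpowers_r_one (hn : Odd n) (hn1 : n ≠ 1) (i : ZMod n) :
    sr i ∉ zpowers (r 1) := by
  have : Nontrivial (ZMod n) := ZMod.nontrivial_iff.mpr hn1
  rw [← centralizer_r hn one_ne_zero, mem_centralizer_singleton_iff, ← commute_iff_eq]
  exact fun h => one_ne_zero ((commute_r_sr_iff hn).mp h.symm)

theorem ncard_Cent (hn : Odd n) (hn1 : n ≠ 1) : (Cent (DihedralGroup n)).ncard = n + 2 := by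
  have : NeZero n := ⟨hn.pos.ne'⟩
  have : Nontrivial (ZMod n) := ZMod.nontrivial_iff.mpr hn1
  rw [Cent_eq hn hn1, Set.ncard_insert_of_notMem, Set.ncard_insert_of_notMem,
    Set.ncard_range_of_injective, Nat.card_zmod]
  · intro i j (hij : zpowers (sr i) = zpowers (sr j))
    rw [← sr_mem_zpowers_sr_iff hn (i := j), ← hij]
    exact mem_zpowers _
  · rintro ⟨i, hi⟩
    exact sr_notMem_zpowers_r_one hn hn1 i (hi ▸ mem_zpowers (sr i))
  · rintro (h | ⟨i, hi⟩)
    · exact sr_notMem_zpowers_r_one hn hn1 0 (h ▸ mem_top _)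
    · exact one_ne_zero ((r_mem_zpowers_sr_iff hn).mp (hi ▸ mem_top (r 1)))

end DihedralGroup

theorem ncard_Cent_of_quotientCenter_mulEquiv_dihedralGroup {G : Type*} [Group G] {n : ℕ}
    (hn : Odd n) (hn1 : n ≠ 1) (φ : (G ⧸ center G) ≃* DihedralGroup n) :
    (Cent G).ncard = n + 2 := by
  let π : G →* DihedralGroup n :=
    (φ : G ⧸ center G →* DihedralGroup n).comp (QuotientGroup.mk' _)
  have hker : π.ker = center G := by
    rw [MonoidHom.ker_mulEquiv_comp, QuotientGroup.ker_mk']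
  rw [ncard_Cent_eq_of_surjective π (φ.surjective.comp (QuotientGroup.mk'_surjective _))
    hker.le (DihedralGroup.isCyclic_centralizer hn), DihedralGroup.ncard_Cent hn hn1]

theorem stmt4_general (G : Type*) [Group G]
    (h : Nonempty ((G ⧸ Subgroup.center G) ≃* DihedralGroup 7)) :
    (Cent G).ncard = 9 :=
  ncard_Cent_of_quotientCenter_mulEquiv_dihedralGroup (by decide) (by decide) h.some

theorem stmt4 (G : Type*) [Group G] [Finite G]
    (h : Nonempty ((G ⧸ Subgroup.center G) ≃* DihedralGroup 7)) :
    (Cent G).ncard = 9 :=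
  stmt4_general G h
end

section
/- If G is a finite group and G/Z(G) is isomorphic to the nonabelian group C7 ⋊ C3 of order 21, then |Cent(G)| = 9. -/
def addAutToMulAut (A : Type*) [AddGroup A] : Multiplicative (AddAut A) →* MulAut (Multiplicative A) where
  toFun f := AddEquiv.toMultiplicative f.toAdd
  map_one' := rfl
  map_mul' _ _ := rfl

/-- The action of `Aut(C7) ≅ C6` on `C7`. -/
def phi42 : (ZMod 7)ˣ →* MulAut (Multiplicative (ZMod 7)) :=
  (addAutToMulAut (ZMod 7)).comp (DistribMulAction.toAddAut (ZMod 7)ˣ (ZMod 7))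

/-- The Frobenius group `C7 ⋊ C6` of order 42, with `C6 ≅ Aut(C7)` acting faithfully. -/
abbrev F42 := Multiplicative (ZMod 7) ⋊[phi42] (ZMod 7)ˣ

def u2 : (ZMod 7)ˣ := ⟨2, 4, by decide, by decide⟩

def phi21 : ↥(Subgroup.zpowers u2) →* MulAut (Multiplicative (ZMod 7)) :=
  phi42.comp (Subgroup.zpowers u2).subtype

/-- The nonabelian group `C7 ⋊ C3` of order 21. -/
abbrev G21 := Multiplicative (ZMod 7) ⋊[phi21] ↥(Subgroup.zpowers u2)

open Subgroup

section CentralQuotient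

variable {G H : Type*} [Group G] [Group H]

lemma centralizer_singleton_eq_comap (π : G →* H) (hker : π.ker ≤ center G) {x : G}
    (hx : π x ≠ 1 → centralizer {π x} ≤ zpowers (π x)) :
    centralizer {x} = comap π (centralizer {π x}) := by
  refine le_antisymm (fun g hg => ?_) (fun g hg => ?_)
  · rw [mem_comap, mem_centralizer_singleton_iff, ← map_mul, ← map_mul,
      mem_centralizer_singleton_iff.mp hg]
  by_cases h1 : π x = 1
  · rw [centralizer_eq_top_iff_subset.mpr (Set.singleton_subset_iff.mpr (hker h1))]
    exact mem_top g
  obtain ⟨k, hk⟩ := mem_zpowers_iff.mp (hx h1 hg)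
  have hz : g * (x ^ k)⁻¹ ∈ center G := hker <| by
    rw [MonoidHom.mem_ker, map_mul, map_inv, map_zpow, hk, mul_inv_cancel]
  have hcomm : Commute x (g * (x ^ k)⁻¹ * x ^ k) :=
    Commute.mul_right (mem_center_iff.mp hz x) ((Commute.refl x).zpow_right k)
  rw [inv_mul_cancel_right] at hcomm
  exact mem_centralizer_singleton_iff.mpr hcomm.eq.symm

lemma cent_eq_image_comap (π : G →* H) (hπ : Function.Surjective π) (hker : π.ker ≤ center G)
    (hH : ∀ q : H, q ≠ 1 → centralizer {q} ≤ zpowers q) : Cent G = comap π '' Cent H := by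
  have key (x : G) := centralizer_singleton_eq_comap π hker (x := x) (hH (π x))
  ext S
  constructor
  · rintro ⟨x, rfl⟩
    exact ⟨_, ⟨π x, rfl⟩, (key x).symm⟩
  · rintro ⟨_, ⟨q, rfl⟩, rfl⟩
    obtain ⟨x, rfl⟩ := hπ q
    exact ⟨x, key x⟩

lemma ncard_cent_eq (π : G →* H) (hπ : Function.Surjective π) (hker : π.ker ≤ center G)
    (hH : ∀ q : H, q ≠ 1 → centralizer {q} ≤ zpowers q) : (Cent G).ncard = (Cent H).ncard := by
  rw [cent_eq_image_comap π hπ hker hH, Set.ncard_image_of_injective _ (comap_injective hπ)]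

end CentralQuotient

namespace G21

instance : Fintype (zpowers u2) :=
  Fintype.subtype ((Finset.range 3).image (u2 ^ ·)) fun v => by
    rw [mem_zpowers_iff_mem_range_orderOf, orderOf_eq_prime (p := 3) (by decide) (by decide)]

instance : Fintype G21 :=
  Fintype.ofEquiv (Multiplicative (ZMod 7) × zpowers u2)
    ⟨fun p => ⟨p.1, p.2⟩, fun a => (a.left, a.right), fun _ => rfl, fun _ => rfl⟩

lemma exists_pow_eq_of_mul_comm :
    ∀ q g : G21, q ≠ 1 → g * q = q * g → ∃ k : Fin 7, q ^ (k : ℕ) = g := by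
  decide +kernel

lemma centralizer_le_zpowers (q : G21) (hq : q ≠ 1) : centralizer {q} ≤ zpowers q := by
  intro g hg
  obtain ⟨k, hk⟩ := exists_pow_eq_of_mul_comm q g hq (mem_centralizer_singleton_iff.mp hg)
  exact hk ▸ pow_mem (mem_zpowers q) k

/-- Representatives of the nine centralizers: `1`, a generator of the Sylow `7`-subgroup, and
one generator of each Sylow `3`-subgroup. -/
def centralizerReps : Fin 9 → G21 :=
  let c : zpowers u2 := ⟨u2, mem_zpowers u2⟩
  ![1, ⟨.ofAdd 1, 1⟩, ⟨.ofAdd 0, c⟩, ⟨.ofAdd 1, c⟩, ⟨.ofAdd 2, c⟩, ⟨.ofAdd 3, c⟩, ⟨.ofAdd 4, c⟩,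
    ⟨.ofAdd 5, c⟩, ⟨.ofAdd 6, c⟩]

lemma exists_centralizerReps_mul_comm_iff : ∀ q : G21, ∃ i : Fin 9, ∀ g : G21,
    (g * q = q * g ↔ g * centralizerReps i = centralizerReps i * g) := by
  decide +kernel

lemma centralizerReps_eq_of_mul_comm_iff : ∀ i j : Fin 9,
    (∀ g : G21, g * centralizerReps i = centralizerReps i * g ↔
      g * centralizerReps j = centralizerReps j * g) → i = j := by
  decide +kernel

lemma cent_eq_range : Cent G21 = Set.range fun i => centralizer {centralizerReps i} := by
  refine le_antisymm ?_ fun _ ⟨i, hi⟩ => ⟨_, hi⟩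
  rintro _ ⟨q, rfl⟩
  obtain ⟨i, hi⟩ := exists_centralizerReps_mul_comm_iff q
  exact ⟨i, SetLike.ext fun g => by simp only [mem_centralizer_singleton_iff, hi]⟩

lemma injective_centralizer_centralizerReps :
    Function.Injective fun i => centralizer ({centralizerReps i} : Set G21) := fun i j hij =>
  centralizerReps_eq_of_mul_comm_iff i j fun g => by
    simpa only [mem_centralizer_singleton_iff] using SetLike.ext_iff.mp hij g

lemma ncard_cent : (Cent G21).ncard = 9 := by
  rw [cent_eq_range, ← Set.image_univ, Set.ncard_image_of_injective _
    injective_centralizer_centralizerReps, Set.ncard_univ, Nat.card_eq_fintype_card,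
    Fintype.card_fin]

end G21

theorem stmt5_general (G : Type*) [Group G]
    (h : Nonempty ((G ⧸ Subgroup.center G) ≃* G21)) :
    (Cent G).ncard = 9 := by
  obtain ⟨e⟩ := h
  let π : G →* G21 := e.toMonoidHom.comp (QuotientGroup.mk' (center G))
  have hπ : Function.Surjective π := e.surjective.comp (QuotientGroup.mk'_surjective _)
  have hker : π.ker ≤ center G := fun x hx => by
    rwa [MonoidHom.mem_ker, MonoidHom.comp_apply, MulEquiv.coe_toMonoidHom,
      MulEquiv.map_eq_one_iff, QuotientGroup.mk'_apply, QuotientGroup.eq_one_iff] at hx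
  rw [ncard_cent_eq π hπ hker G21.centralizer_le_zpowers, G21.ncard_cent]

theorem stmt5 (G : Type*) [Group G] [Finite G]
    (h : Nonempty ((G ⧸ Subgroup.center G) ≃* G21)) :
    (Cent G).ncard = 9 :=
  stmt5_general G h
end

section
/- If G is a finite group and the index of Z(G) in G is a product of at most three primes (i.e., |G : Z(G)| = p, pq, or pqr for primes p, q, r), then G is a CA-group: the centralizer C_G(x) is abelian for every x ∈ G \ Z(G). -/
/-!
For `x ∉ Z(G)` put `C = C_G(x)`. In the chain `Z(G) ≤ Z(C) ≤ C ≤ G` the last two steps are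
proper (`x ∈ Z(C) \ Z(G)` and `C ≠ G`), so `|C : Z(C)|` has at least two prime factors
(with multiplicity) fewer than `|G : Z(G)|`, hence at most one. The index of a center is never
prime, because a cyclic central quotient forces the group to be abelian; so `Z(C) = C`.
-/

open ArithmeticFunction
open scoped ArithmeticFunction.Omega

theorem Nat.cardFactors_le_three_of_eq_prime_or_mul {n p q r : ℕ} (hp : p.Prime) (hq : q.Prime)
    (hr : r.Prime) (h : n = p ∨ n = p * q ∨ n = p * q * r) : Ω n ≤ 3 := by
  rcases h with rfl | rfl | rfl <;>
    simp [cardFactors_mul, hp.ne_zero, hq.ne_zero, hr.ne_zero, cardFactors_apply_prime, hp, hq, hr]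

namespace Subgroup

variable {G : Type*} [Group G]

theorem index_center_ne_prime : ¬ (center G).index.Prime := by
  intro hp
  have : Fact (center G).index.Prime := ⟨hp⟩
  have : IsCyclic (G ⧸ center G) := isCyclic_of_prime_card (index_eq_card _).symm
  have : IsMulCommutative G := isMulCommutative_of_isCyclic_quotient_center_self G
  rw [center_eq_top] at hp
  exact Nat.not_prime_one (index_top (G := G) ▸ hp)

theorem cardFactors_index_center_ne_one : Ω (center G).index ≠ 1 :=
  cardFactors_eq_one_iff_prime.not.mpr index_center_ne_prime

theorem isMulCommutative_of_cardFactors_index_center_le_one [(center G).FiniteIndex]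
    (h : Ω (center G).index ≤ 1) : IsMulCommutative G := by
  have hΩ : Ω (center G).index = 0 := by
    have := cardFactors_index_center_ne_one (G := G)
    omega
  have hZ : (center G).index = 1 :=
    (cardFactors_eq_zero_iff_eq_zero_or_one.mp hΩ).resolve_left index_ne_zero_of_finite
  exact center_eq_top_iff.mp (index_eq_one.mp hZ)

theorem subgroupOf_center_le_center (H : Subgroup G) : (center G).subgroupOf H ≤ center H :=
  fun _ hz => mem_center_iff.mpr fun g => Subtype.ext (mem_center_iff.mp hz g)

theorem index_center_eq_mul_of_center_le {H : Subgroup G} (hH : center G ≤ H) :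
    (center G).index =
      (center H).index * ((center G).subgroupOf H).relIndex (center H) * H.index := by
  rw [← relIndex_mul_index hH, relIndex, ← relIndex_mul_index (subgroupOf_center_le_center H),
    mul_comm (center H).index]

theorem cardFactors_index_center_centralizer_add_two_le [(center G).FiniteIndex] {x : G}
    (hx : x ∉ center G) : Ω (center (centralizer {x})).index + 2 ≤ Ω (center G).index := by
  set C := centralizer ({x} : Set G)
  have hZC : center G ≤ C := center_le_centralizer _
  have : C.FiniteIndex := finiteIndex_of_le hZC
  have : (center C).FiniteIndex := finiteIndex_of_le (subgroupOf_center_le_center C)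
  have hx_C : ⟨x, mem_centralizer_singleton_iff.mpr rfl⟩ ∈ center C :=
    mem_center_iff.mpr fun g => Subtype.ext (mem_centralizer_singleton_iff.mp g.2)
  have hrel : 1 < ((center G).subgroupOf C).relIndex (center C) := by
    refine one_lt_index_of_ne_top fun htop => hx ?_
    have := (subgroupOf_eq_top.mp htop) hx_C
    rwa [mem_subgroupOf] at this
  have hC : 1 < C.index := by
    refine one_lt_index_of_ne_top fun htop => hx (mem_center_iff.mpr fun g => ?_)
    exact mem_centralizer_singleton_iff.mp (htop ▸ mem_top g : g ∈ C)
  have hZC_ne : (center C).index ≠ 0 := index_ne_zero_of_finite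
  rw [index_center_eq_mul_of_center_le hZC,
    cardFactors_mul (Nat.mul_ne_zero hZC_ne (by omega)) (by omega),
    cardFactors_mul hZC_ne (by omega)]
  have := cardFactors_pos_iff_one_lt.mpr hrel
  have := cardFactors_pos_iff_one_lt.mpr hC
  omega

end Subgroup

theorem stmt12 (G : Type*) [Group G] [Finite G]
    (h : ∃ p q r : ℕ, p.Prime ∧ q.Prime ∧ r.Prime ∧
      ((Subgroup.center G).index = p ∨ (Subgroup.center G).index = p * q ∨
        (Subgroup.center G).index = p * q * r)) :
    ∀ x : G, x ∉ Subgroup.center G →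
      ∀ a ∈ Subgroup.centralizer {x}, ∀ b ∈ Subgroup.centralizer {x}, a * b = b * a := by
  obtain ⟨p, q, r, hp, hq, hr, hidx⟩ := h
  intro x hx a ha b hb
  have hcomm : IsMulCommutative (Subgroup.centralizer {x}) := by
    apply Subgroup.isMulCommutative_of_cardFactors_index_center_le_one
    have := Subgroup.cardFactors_index_center_centralizer_add_two_le hx
    have := Nat.cardFactors_le_three_of_eq_prime_or_mul hp hq hr hidx
    omega
  exact congrArg Subtype.val (hcomm.is_comm.comm ⟨a, ha⟩ ⟨b, hb⟩)
end

section
/- If a finite group G is the union of three proper subgroups H1, H2, H3, then the intersection H1 ∩ H2 ∩ H3 has index 4 in G. -/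
/-!
Pick an element lying only in `H₁`, one only in `H₂` and one only in `H₃` (two proper subgroups
never cover a group). Multiplying by such elements shows that any two of the subgroups meet inside
the third, and that `g * b ∈ H₁` for every `g ∉ H₁` when `b` lies only in `H₂`, so `H₁` has index
two; likewise `H₂`. Hence `H₁ ∩ H₂ ∩ H₃ = H₁ ∩ H₂` is the intersection of two distinct subgroups of
index two, which has index four.
-/

namespace Subgroup

variable {G : Type*} [Group G] {A B C : Subgroup G}

theorem exists_notMem_and_notMem_of_ne_top (hA : A ≠ ⊤) (hB : B ≠ ⊤) :
    ∃ g : G, g ∉ A ∧ g ∉ B := by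
  obtain ⟨x, hxA⟩ := not_forall.1 (mt A.eq_top_iff'.2 hA)
  obtain ⟨y, hyB⟩ := not_forall.1 (mt B.eq_top_iff'.2 hB)
  by_cases hxB : x ∈ B
  · by_cases hyA : y ∈ A
    · exact ⟨x * y, fun h => hxA ((mul_mem_cancel_right hyA).1 h),
        fun h => hyB ((mul_mem_cancel_left hxB).1 h)⟩
    · exact ⟨y, hyA, hyB⟩
  · exact ⟨x, hxA, hxB⟩

theorem relIndex_eq_two_of_index_eq_two (hB : B.index = 2) (hAB : ¬ A ≤ B) :
    B.relIndex A = 2 := by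
  obtain ⟨a, haA, haB⟩ := SetLike.not_le_iff_exists.1 hAB
  refine relIndex_eq_two_iff_exists_notMem_and.2 ⟨a, haA, haB, fun g _ => ?_⟩
  rw [mul_mem_iff_of_index_two hB]
  tauto

theorem index_inf_eq_four (hA : A.index = 2) (hB : B.index = 2) (hAB : ¬ A ≤ B) :
    (A ⊓ B).index = 4 := by
  rw [← relIndex_mul_index inf_le_left, inf_relIndex_left,
    relIndex_eq_two_of_index_eq_two hB hAB, hA]

section Cover

variable (hcover : ∀ g : G, g ∈ A ∨ g ∈ B ∨ g ∈ C)
include hcover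

theorem mul_mem_of_cover {x y : G} (hxB : x ∈ B) (hxC : x ∉ C) (hyC : y ∈ C) (hyB : y ∉ B) :
    x * y ∈ A := by
  rcases hcover (x * y) with h | h | h
  · exact h
  · exact absurd ((mul_mem_cancel_left hxB).1 h) hyB
  · exact absurd ((mul_mem_cancel_right hyC).1 h) hxC

theorem inf_le_of_cover (hB : B ≠ ⊤) (hC : C ≠ ⊤) : B ⊓ C ≤ A := by
  obtain ⟨a, haB, haC⟩ := exists_notMem_and_notMem_of_ne_top hB hC
  have haA : a ∈ A := by have := hcover a; tauto
  intro x hx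
  obtain ⟨hxB, hxC⟩ := mem_inf.1 hx
  rcases hcover (a * x) with h | h | h
  · exact (mul_mem_cancel_left haA).1 h
  · exact absurd ((mul_mem_cancel_right hxB).1 h) haB
  · exact absurd ((mul_mem_cancel_right hxC).1 h) haC

theorem index_eq_two_of_cover (hA : A ≠ ⊤) (hB : B ≠ ⊤) (hC : C ≠ ⊤) : A.index = 2 := by
  obtain ⟨b, hbA, hbC⟩ := exists_notMem_and_notMem_of_ne_top hA hC
  obtain ⟨c, hcA, hcB⟩ := exists_notMem_and_notMem_of_ne_top hA hB
  have hbB : b ∈ B := by have := hcover b; tauto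
  have hcC : c ∈ C := by have := hcover c; tauto
  have hBC : B ⊓ C ≤ A := inf_le_of_cover hcover hB hC
  refine index_eq_two_iff_exists_notMem_and.2 ⟨b, hbA, fun g => ?_⟩
  by_cases hgA : g ∈ A
  · exact .inr hgA
  left
  rcases (hcover g).resolve_left hgA with hgB | hgC
  · have hgC : g ∉ C := fun hgC => hgA (hBC ⟨hgB, hgC⟩)
    -- `g * b = (g * c) * (b⁻¹ * c)⁻¹`, and both factors lie in `A`
    have hgc : g * c ∈ A := mul_mem_of_cover hcover hgB hgC hcC hcB
    have hbc : b⁻¹ * c ∈ A :=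
      mul_mem_of_cover hcover (inv_mem hbB) (by simpa using hbC) hcC hcB
    simpa [mul_assoc] using mul_mem hgc (inv_mem hbc)
  · have hgB : g ∉ B := fun hgB => hgA (hBC ⟨hgB, hgC⟩)
    have hbg : b⁻¹ * g⁻¹ ∈ A :=
      mul_mem_of_cover hcover (inv_mem hbB) (by simpa using hbC) (inv_mem hgC) (by simpa using hgB)
    simpa using inv_mem hbg

end Cover

end Subgroup

open Subgroup in
theorem stmt15_general (G : Type*) [Group G] (H1 H2 H3 : Subgroup G)
    (h1 : H1 ≠ ⊤) (h2 : H2 ≠ ⊤) (h3 : H3 ≠ ⊤)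
    (hcover : ∀ g : G, g ∈ H1 ∨ g ∈ H2 ∨ g ∈ H3) :
    (H1 ⊓ H2 ⊓ H3).index = 4 := by
  have hcover₂ : ∀ g : G, g ∈ H2 ∨ g ∈ H1 ∨ g ∈ H3 := fun g => or_left_comm.1 (hcover g)
  have hcover₃ : ∀ g : G, g ∈ H3 ∨ g ∈ H1 ∨ g ∈ H2 := fun g => or_rotate.2 (hcover g)
  obtain ⟨a, ha2, ha3⟩ := exists_notMem_and_notMem_of_ne_top h2 h3
  have ha1 : a ∈ H1 := by have := hcover a; tauto
  rw [inf_eq_left.2 (inf_le_of_cover hcover₃ h1 h2)]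
  exact index_inf_eq_four (index_eq_two_of_cover hcover h1 h2 h3)
    (index_eq_two_of_cover hcover₂ h2 h1 h3) fun h => ha2 (h ha1)

theorem stmt15 (G : Type*) [Group G] [Finite G] (H1 H2 H3 : Subgroup G)
    (h1 : H1 ≠ ⊤) (h2 : H2 ≠ ⊤) (h3 : H3 ≠ ⊤)
    (hcover : ∀ g : G, g ∈ H1 ∨ g ∈ H2 ∨ g ∈ H3) :
    (H1 ⊓ H2 ⊓ H3).index = 4 :=
  stmt15_general G H1 H2 H3 h1 h2 h3 hcover
end

section
/- If G is a finite group with |Cent(G)| = 9, then the maximal size r of a set of pairwise non-commuting elements of G satisfies 5 ≤ r ≤ 8. -/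
/-!
Let `B` be a largest set of pairwise non-commuting elements. Every element commutes with some
member of `B` (otherwise it could be added to `B`), and an element commuting with all of `B` is
central (otherwise multiplying by it the members of `B` that commute with a witness `g` yields,
together with `g`, a larger set). When `|B| ≤ 4`, exchanging members of `B` for suitable products
shows that every non-central `x` commutes with exactly one `b ∈ B`, that then `C(x) = C(b)`, and
hence `|Cent G| ≤ |B| + 1 ≤ 5`. Conversely, distinct members of `B` have distinct proper
centralizers, so `|B| ≤ |Cent G| - 1 = 8`.
-/

section

open Finset Subgroup

section Commute

variable {G : Type*} [Group G] {a b c : G}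

theorem Commute.mul_left_iff (h : Commute a c) : Commute (a * b) c ↔ Commute b c :=
  ⟨fun h' => by simpa only [inv_mul_cancel_left] using h.inv_left.mul_left h',
    fun h' => h.mul_left h'⟩

theorem Commute.mul_left_iff' (h : Commute b c) : Commute (a * b) c ↔ Commute a c :=
  ⟨fun h' => by simpa only [mul_inv_cancel_right] using h'.mul_left h.inv_left,
    fun h' => h'.mul_left h⟩

theorem Commute.mul_mul_iff {a' b' : G} (hb : Commute b a') (hbb' : Commute b b')
    (hb' : Commute b' a) : Commute (a * b) (a' * b') ↔ Commute a a' := by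
  rw [Commute.mul_left_iff' (hb.mul_right hbb'), Commute.symm_iff, Commute.mul_left_iff' hb',
    Commute.symm_iff]

theorem not_commute_mul_mul_of_not_commute {x : G} (hxb : Commute x b) (hxc : Commute x c)
    (hbc : ¬Commute b c) : ¬Commute (x * b * c) b ∧ ¬Commute (x * b * c) c :=
  ⟨fun h => hbc ((Commute.mul_left_iff (hxb.mul_left (.refl b))).mp h).symm,
    fun h => hbc ((Commute.mul_left_iff hxc).mp ((Commute.mul_left_iff' (.refl c)).mp h))⟩

end Commute

variable {G : Type*} [Group G]

namespace Finset

def IsNoncommuting (s : Finset G) : Prop :=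
  (s : Set G).Pairwise fun a b => ¬Commute a b

structure IsMaxNoncommuting (B : Finset G) : Prop where
  isNoncommuting : B.IsNoncommuting
  card_le : ∀ s : Finset G, s.IsNoncommuting → #s ≤ #B

variable {s B : Finset G} {a b c d e u v x : G}

theorem IsNoncommuting.singleton (a : G) : ({a} : Finset G).IsNoncommuting := by
  simp [IsNoncommuting]

theorem IsNoncommuting.mono (hs : s.IsNoncommuting) (h : B ⊆ s) : B.IsNoncommuting :=
  Set.Pairwise.mono (coe_subset.mpr h) hs

theorem IsNoncommuting.card_lt_ncard_cent [Finite G] (hs : s.IsNoncommuting) (h : 1 < #s) :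
    #s < (Cent G).ncard := by
  have hinj : Set.InjOn (fun b : G => centralizer {b}) s := by
    intro a ha b hb hab
    by_contra hne
    have hb' : b ∈ centralizer {a} := by
      rw [show centralizer {a} = centralizer {b} from hab]
      exact mem_centralizer_singleton_iff.mpr rfl
    exact hs ha hb hne (mem_centralizer_singleton_iff.mp hb').symm
  have htop : ⊤ ∉ (fun b : G => centralizer {b}) '' s := by
    rintro ⟨a, ha, hatop⟩
    obtain ⟨b, hb, hba⟩ := exists_mem_ne h a
    have hb' : b ∈ centralizer {a} := by
      rw [show centralizer {a} = ⊤ from hatop]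
      exact mem_top b
    exact hs hb ha hba (mem_centralizer_singleton_iff.mp hb')
  have hsub : insert ⊤ ((fun b : G => centralizer {b}) '' s) ⊆ Cent G := by
    rintro _ (rfl | ⟨a, -, rfl⟩)
    · exact ⟨1, centralizer_eq_top_iff_subset.mpr (by simp)⟩
    · exact ⟨a, rfl⟩
  calc #s < #s + 1 := Nat.lt_succ_self _
    _ = (insert ⊤ ((fun b : G => centralizer {b}) '' s)).ncard := by
      rw [Set.ncard_insert_of_notMem htop, hinj.ncard_image, Set.ncard_coe_finset]
    _ ≤ (Cent G).ncard := Set.ncard_le_ncard hsub (Set.finite_range _)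

theorem IsMaxNoncommuting.of_card_le (hB : B.IsMaxNoncommuting) (hs : s.IsNoncommuting)
    (h : #B ≤ #s) : s.IsMaxNoncommuting :=
  ⟨hs, fun t ht => (hB.card_le t ht).trans h⟩

variable [DecidableEq G]

theorem IsNoncommuting.insert (hs : s.IsNoncommuting) (hx : ∀ b ∈ s, ¬Commute x b) :
    (insert x s).IsNoncommuting := by
  rw [IsNoncommuting, coe_insert]
  exact Set.Pairwise.insert hs fun b hb _ => ⟨hx b hb, fun h => hx b hb h.symm⟩

theorem card_insert_of_forall_not_commute (hx : ∀ b ∈ s, ¬Commute x b) :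
    #(insert x s) = #s + 1 :=
  card_insert_of_notMem fun h => hx x h (.refl x)

namespace IsMaxNoncommuting

theorem exists_commute (hB : B.IsMaxNoncommuting) (x : G) : ∃ b ∈ B, Commute x b := by
  by_contra! h
  have := hB.card_le _ (hB.isNoncommuting.insert h)
  rw [card_insert_of_forall_not_commute h] at this
  omega

theorem exists_commute_mul (hB : B.IsMaxNoncommuting) (hc : c ∈ B) (hxc : ¬Commute x c) :
    ∃ b ∈ B, b ≠ c ∧ ¬Commute x b ∧ Commute (x * c) b := by
  obtain ⟨b, hb, hxcb⟩ := hB.exists_commute (x * c)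
  have hbc : b ≠ c := by
    rintro rfl
    exact hxc ((Commute.mul_left_iff' (.refl b)).mp hxcb)
  exact ⟨b, hb, hbc, fun hxb => hB.isNoncommuting hc hb hbc.symm
    ((Commute.mul_left_iff hxb).mp hxcb), hxcb⟩

theorem mem_center_of_forall_commute (hB : B.IsMaxNoncommuting) (hx : ∀ b ∈ B, Commute x b) :
    x ∈ center G := by
  classical
  refine mem_center_iff.mpr fun g => by_contra fun hgx => ?_
  have hxg : ¬Commute x g := fun h => hgx h.eq.symm
  -- `insert g (B.image f)` will be a larger non-commuting set
  let e : G → G := fun b => if Commute g b then x else 1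
  let f : G → G := fun b => b * e b
  have he : ∀ b y, Commute x y → Commute (e b) y := by
    intro b y h
    simp only [e]
    split_ifs
    exacts [h, .one_left y]
  have hgf : ∀ b, ¬Commute g (f b) := by
    intro b
    by_cases hgb : Commute g b
    · simp only [f, e, if_pos hgb]
      exact fun h => hxg ((Commute.mul_left_iff hgb.symm).mp h.symm)
    · simpa only [f, e, if_neg hgb, mul_one] using hgb
  have hf : ∀ b ∈ B, ∀ b' ∈ B, b ≠ b' → ¬Commute (f b) (f b') := fun b hb b' hb' hbb' h =>
    hB.isNoncommuting hb hb' hbb' <| (Commute.mul_mul_iff (he b b' (hx b' hb'))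
      (he b _ (he b' x (.refl x)).symm) (he b' b (hx b hb))).mp h
  have hinj : Set.InjOn f B := fun b hb b' hb' h =>
    by_contra fun hbb' => hf b hb b' hb' hbb' (h ▸ .refl (f b'))
  have hB' : (B.image f).IsNoncommuting := by
    rw [IsNoncommuting, coe_image]
    rintro _ ⟨b, hb, rfl⟩ _ ⟨b', hb', rfl⟩ hne
    exact hf b hb b' hb' fun h => hne (h ▸ rfl)
  have hg : ∀ y ∈ B.image f, ¬Commute g y := by
    simp only [mem_image]
    rintro _ ⟨b, -, rfl⟩
    exact hgf b
  have := hB.card_le _ (hB'.insert hg)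
  rw [card_insert_of_forall_not_commute hg, card_image_of_injOn hinj] at this
  omega

theorem exists_pair_not_commute (hB : B.IsMaxNoncommuting) (hx : x ∉ center G) :
    ∃ d ∈ B, ∃ e ∈ B, d ≠ e ∧ ¬Commute x d ∧ ¬Commute x e := by
  obtain ⟨d, hd, hxd⟩ : ∃ d ∈ B, ¬Commute x d := by
    by_contra! h
    exact hx (hB.mem_center_of_forall_commute h)
  obtain ⟨e, he, hed, hxe, -⟩ := hB.exists_commute_mul hd hxd
  exact ⟨d, hd, e, he, hed.symm, hxd, hxe⟩

theorem commute_of_forall_ne_not_commute (hB : B.IsMaxNoncommuting) (hc : c ∈ B)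
    (hx : ∀ b ∈ B, b ≠ c → ¬Commute x b) (hy : ∀ b ∈ B, b ≠ c → ¬Commute y b) :
    Commute x y := by
  by_contra hxy
  have hy' : ∀ b ∈ B.erase c, ¬Commute y b := fun b hb =>
    hy b (mem_of_mem_erase hb) (ne_of_mem_erase hb)
  have hB' : (insert y (B.erase c)).IsMaxNoncommuting :=
    hB.of_card_le ((hB.isNoncommuting.mono (erase_subset c B)).insert hy') <| by
      rw [card_insert_of_forall_not_commute hy', card_erase_add_one hc]
  obtain ⟨b, hb, hxb⟩ := hB'.exists_commute x
  rcases mem_insert.mp hb with rfl | hb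
  · exact hxy hxb
  · exact hx b (mem_of_mem_erase hb) (ne_of_mem_erase hb) hxb

theorem not_forall_commute_iff_not_commute (hB : B.IsMaxNoncommuting) :
    ¬∀ b ∈ B, (Commute x b ↔ ¬Commute y b) := by
  intro h
  obtain ⟨b, hb, hxyb⟩ := hB.exists_commute (x * y)
  by_cases hxb : Commute x b
  · exact (h b hb).mp hxb ((Commute.mul_left_iff hxb).mp hxyb)
  · exact hxb ((h b hb).mpr fun hyb => hxb ((Commute.mul_left_iff' hyb).mp hxyb))

theorem centralizer_eq_centralizer (hB : B.IsMaxNoncommuting)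
    (huniq : ∀ ⦃x⦄, x ∉ center G → ∀ ⦃b c⦄, b ∈ B → c ∈ B → Commute x b → Commute x c → b = c)
    (hsep : ∀ ⦃u v⦄, u ∉ center G → v ∉ center G → Commute u v →
      ∀ ⦃b c⦄, b ∈ B → c ∈ B → Commute u b → Commute v c → b = c)
    (hx : x ∉ center G) (hb : b ∈ B) (hxb : Commute x b) :
    centralizer {x} = centralizer {b} := by
  ext g
  simp only [mem_centralizer_singleton_iff]
  change Commute g x ↔ Commute g b
  by_cases hg : g ∈ center G
  · exact ⟨fun _ => (mem_center_iff.mp hg b).symm, fun _ => (mem_center_iff.mp hg x).symm⟩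
  constructor
  · intro hgx
    obtain ⟨c, hc, hgc⟩ := hB.exists_commute g
    exact hsep hx hg hgx.symm hb hc hxb hgc ▸ hgc
  · intro hgb
    exact (hB.commute_of_forall_ne_not_commute hb
      (fun c hc hcb hxc => hcb (huniq hx hc hb hxc hxb))
      (fun c hc hcb hgc => hcb (huniq hg hc hb hgc hgb))).symm

theorem ncard_cent_le (hB : B.IsMaxNoncommuting)
    (huniq : ∀ ⦃x⦄, x ∉ center G → ∀ ⦃b c⦄, b ∈ B → c ∈ B → Commute x b → Commute x c → b = c)
    (hsep : ∀ ⦃u v⦄, u ∉ center G → v ∉ center G → Commute u v →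
      ∀ ⦃b c⦄, b ∈ B → c ∈ B → Commute u b → Commute v c → b = c) :
    (Cent G).ncard ≤ #B + 1 := by
  have hsub : Cent G ⊆ insert ⊤ ((fun b : G => centralizer {b}) '' B) := by
    rintro _ ⟨x, rfl⟩
    by_cases hx : x ∈ center G
    · exact Or.inl (centralizer_eq_top_iff_subset.mpr (Set.singleton_subset_iff.mpr hx))
    · obtain ⟨b, hb, hxb⟩ := hB.exists_commute x
      exact Or.inr ⟨b, hb, (hB.centralizer_eq_centralizer huniq hsep hx hb hxb).symm⟩
  calc (Cent G).ncard ≤ (insert ⊤ ((fun b : G => centralizer {b}) '' B)).ncard :=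
        Set.ncard_le_ncard hsub ((B.finite_toSet.image _).insert _)
    _ ≤ ((fun b : G => centralizer {b}) '' B).ncard + 1 := Set.ncard_insert_le _ _
    _ ≤ #B + 1 := by
      grw [Set.ncard_image_le B.finite_toSet, Set.ncard_coe_finset]

theorem exists_not_commute_card_eq_four (hB : B.IsMaxNoncommuting) (hx : x ∉ center G)
    (hbc : b ≠ c) (hxb : Commute x b) (hxc : Commute x c) :
    ∃ d ∈ B, ∃ e ∈ B, ¬Commute x d ∧ ¬Commute x e ∧ #{b, c, d, e} = 4 := by
  obtain ⟨d, hd, e, he, hde, hxd, hxe⟩ := hB.exists_pair_not_commute hx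
  have hbd : b ≠ d := by rintro rfl; exact hxd hxb
  have hbe : b ≠ e := by rintro rfl; exact hxe hxb
  have hcd : c ≠ d := by rintro rfl; exact hxd hxc
  have hce : c ≠ e := by rintro rfl; exact hxe hxc
  exact ⟨d, hd, e, he, hxd, hxe, by simp [card_insert_of_notMem, *]⟩

theorem eq_of_commute_of_card_le_three (hB : B.IsMaxNoncommuting) (h3 : #B ≤ 3)
    (hx : x ∉ center G) (hb : b ∈ B) (hc : c ∈ B) (hxb : Commute x b) (hxc : Commute x c) :
    b = c := by
  by_contra hbc
  obtain ⟨d, hd, e, he, -, -, h4⟩ := hB.exists_not_commute_card_eq_four hx hbc hxb hxc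
  have := card_le_card (show ({b, c, d, e} : Finset G) ⊆ B by simp [insert_subset_iff, *])
  omega

theorem eq_of_commute_pair_of_card_le_three (hB : B.IsMaxNoncommuting) (h3 : #B ≤ 3)
    (hu : u ∉ center G) (hv : v ∉ center G) (huv : Commute u v) (hb : b ∈ B) (hc : c ∈ B)
    (hub : Commute u b) (hvc : Commute v c) : b = c := by
  by_contra hbc
  have huc : ¬Commute u c := fun h => hbc (hB.eq_of_commute_of_card_le_three h3 hu hb hc hub h)
  have hvb : ¬Commute v b := fun h => hbc (hB.eq_of_commute_of_card_le_three h3 hv hb hc h hvc)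
  have huvb : ¬Commute (u * v) b := fun h => hvb ((Commute.mul_left_iff hub).mp h)
  have huvc : ¬Commute (u * v) c := fun h => huc ((Commute.mul_left_iff' hvc).mp h)
  have hT : ({u * v, b, c} : Finset G).IsMaxNoncommuting := by
    have hbc' : ∀ y ∈ ({c} : Finset G), ¬Commute b y := by
      simpa using hB.isNoncommuting hb hc hbc
    have huv' : ∀ y ∈ ({b, c} : Finset G), ¬Commute (u * v) y := by simp [huvb, huvc]
    refine hB.of_card_le (((IsNoncommuting.singleton c).insert hbc').insert huv') ?_
    rw [card_insert_of_forall_not_commute huv', card_insert_of_forall_not_commute hbc',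
      card_singleton]
    omega
  -- in the largest set `{u * v, b, c}`, `u` commutes with all members but `c`
  obtain ⟨e, he, hec, hue, -⟩ := hT.exists_commute_mul (by simp) huc
  simp only [mem_insert, mem_singleton] at he
  rcases he with rfl | rfl | rfl
  · exact hue ((Commute.refl u).mul_right huv)
  · exact hue hub
  · exact hec rfl

theorem quadruple (hB : B.IsMaxNoncommuting) (hB4 : #B ≤ 4)
    (hab : ¬Commute a b) (hac : ¬Commute a c) (had : ¬Commute a d)
    (hbc : ¬Commute b c) (hbd : ¬Commute b d) (hcd : ¬Commute c d) :
    ({a, b, c, d} : Finset G).IsMaxNoncommuting := by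
  have hc : ∀ y ∈ ({d} : Finset G), ¬Commute c y := by simpa using hcd
  have hb : ∀ y ∈ ({c, d} : Finset G), ¬Commute b y := by simp [hbc, hbd]
  have ha : ∀ y ∈ ({b, c, d} : Finset G), ¬Commute a y := by simp [hab, hac, had]
  refine hB.of_card_le ((((IsNoncommuting.singleton d).insert hc).insert hb).insert ha) ?_
  rw [card_insert_of_forall_not_commute ha, card_insert_of_forall_not_commute hb,
    card_insert_of_forall_not_commute hc, card_singleton]
  exact hB4

theorem commute_mul_of_quadruple (hQ : ({a, b, c, d} : Finset G).IsMaxNoncommuting)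
    (ha : Commute x a) (hb : Commute x b) (hc : ¬Commute x c) : Commute (x * c) d := by
  obtain ⟨e, he, hec, hxe, hxce⟩ := hQ.exists_commute_mul (by simp) hc
  simp only [mem_insert, mem_singleton] at he
  rcases he with rfl | rfl | rfl | rfl
  · exact absurd ha hxe
  · exact absurd hb hxe
  · exact absurd rfl hec
  · exact hxce

theorem not_commute_of_quadruple (hQ : ({a, b, c, d} : Finset G).IsMaxNoncommuting)
    (hx : x ∉ center G) (hc : Commute x c) (hd : Commute x d) :
    ¬Commute x a ∧ ¬Commute x b := by
  obtain ⟨e, he, f, hf, hef, hxe, hxf⟩ := hQ.exists_pair_not_commute hx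
  simp only [mem_insert, mem_singleton] at he hf
  rcases he with rfl | rfl | rfl | rfl <;> rcases hf with rfl | rfl | rfl | rfl <;> tauto

theorem not_commute_of_sole_partners_of_commute_mul
    (hQ : ({c, d, a, b} : Finset G).IsMaxNoncommuting) (hcd : c ≠ d)
    (hua : Commute u a) (hub : ¬Commute u b) (huc : ¬Commute u c) (hud : ¬Commute u d)
    (hvb : Commute v b) (hva : ¬Commute v a) (hvd : ¬Commute v d)
    (huvc : Commute (u * v) c) : ¬Commute u v := by
  intro huv
  have huva : ¬Commute (u * v) a := fun h => hva ((Commute.mul_left_iff hua).mp h)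
  have huvb : ¬Commute (u * v) b := fun h => hub ((Commute.mul_left_iff' hvb).mp h)
  have hab : a ≠ b := by rintro rfl; exact hub hua
  have had : a ≠ d := by rintro rfl; exact hud hua
  have hcb : c ≠ b := by rintro rfl; exact huvb huvc
  have hbd : b ≠ d := by rintro rfl; exact hvd hvb
  by_cases huvd : Commute (u * v) d
  · -- then `v * b` commutes with `a, b` only and `u * v` with `c, d` only
    have hQ' : ({c, d, b, a} : Finset G).IsMaxNoncommuting := by rwa [pair_comm]
    have hwa : Commute (v * b) a := (Commute.mul_left_iff hua).mp <| by
      rw [← mul_assoc]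
      exact commute_mul_of_quadruple hQ' huvc huvd huvb
    have hwb : Commute (v * b) b := hvb.mul_left (.refl b)
    have hw : v * b ∉ center G := fun h =>
      hub ((Commute.mul_left_iff huv.symm).mp (mem_center_iff.mp h u).symm).symm
    obtain ⟨hwc, hwd⟩ := not_commute_of_quadruple hQ hw hwa hwb
    refine hQ.not_forall_commute_iff_not_commute (x := v * b) (y := u * v) ?_
    simp only [mem_insert, mem_singleton, forall_eq_or_imp, forall_eq]
    exact ⟨iff_of_false hwc (not_not.mpr huvc), iff_of_false hwd (not_not.mpr huvd),
      iff_of_true hwa huva, iff_of_true hwb huvb⟩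
  · have hQ₁ : ({a, u * v, b, d} : Finset G).IsMaxNoncommuting :=
      hQ.quadruple card_le_four (fun h => huva h.symm) (hQ.isNoncommuting (by simp) (by simp) hab)
        (hQ.isNoncommuting (by simp) (by simp) had) huvb huvd
        (hQ.isNoncommuting (by simp) (by simp) hbd)
    have hQ₂ : ({u, c, b, d} : Finset G).IsMaxNoncommuting :=
      hQ.quadruple card_le_four huc hub hud (hQ.isNoncommuting (by simp) (by simp) hcb)
        (hQ.isNoncommuting (by simp) (by simp) hcd) (hQ.isNoncommuting (by simp) (by simp) hbd)
    have h₁ : Commute (u * b) d :=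
      commute_mul_of_quadruple hQ₁ hua ((Commute.refl u).mul_right huv) hub
    have h₂ : Commute (u * v * b) d :=
      commute_mul_of_quadruple hQ₂ ((Commute.refl u).mul_left huv.symm) huvc huvb
    rw [huv.eq, mul_assoc] at h₂
    exact hvd ((Commute.mul_left_iff' h₁).mp h₂)

theorem not_commute_of_sole_partners (hQ : ({c, d, a, b} : Finset G).IsMaxNoncommuting)
    (hcd : c ≠ d) (hua : Commute u a) (hub : ¬Commute u b) (huc : ¬Commute u c)
    (hud : ¬Commute u d) (hvb : Commute v b) (hva : ¬Commute v a) (hvc : ¬Commute v c)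
    (hvd : ¬Commute v d) : ¬Commute u v := by
  intro huv
  obtain ⟨e, he, huve⟩ := hQ.exists_commute (u * v)
  simp only [mem_insert, mem_singleton] at he
  rcases he with he | he | he | he <;> subst e
  · exact not_commute_of_sole_partners_of_commute_mul hQ hcd hua hub huc hud hvb hva hvd huve huv
  · have hQ' : ({d, c, a, b} : Finset G).IsMaxNoncommuting := by rwa [insert_comm]
    exact not_commute_of_sole_partners_of_commute_mul hQ' hcd.symm hua hub hud huc hvb hva hvc
      huve huv
  · exact hva ((Commute.mul_left_iff hua).mp huve)
  · exact hub ((Commute.mul_left_iff' hvb).mp huve)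

theorem false_of_two_partners_of_commute_mul (hQ : ({b, c, d, e} : Finset G).IsMaxNoncommuting)
    (hbc : b ≠ c) (hxb : Commute x b) (hxc : Commute x c) (hxd : ¬Commute x d)
    (hxe : ¬Commute x e) (hwd : Commute (x * b * c) d) : False := by
  obtain ⟨hwb, hwc⟩ := not_commute_mul_mul_of_not_commute hxb hxc
    (hQ.isNoncommuting (by simp) (by simp) hbc)
  by_cases hwe : Commute (x * b * c) e
  · refine hQ.not_forall_commute_iff_not_commute (x := x) (y := x * b * c) ?_
    simp only [mem_insert, mem_singleton, forall_eq_or_imp, forall_eq]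
    exact ⟨iff_of_true hxb hwb, iff_of_true hxc hwc, iff_of_false hxd (not_not.mpr hwd),
      iff_of_false hxe (not_not.mpr hwe)⟩
  · -- otherwise `x * b * c` commutes only with `d`, `x * d` only with `e`, and they commute
    have hdb : ¬Commute d b := hQ.isNoncommuting (by simp) (by simp) (by rintro rfl; exact hxd hxb)
    have hdc : ¬Commute d c := hQ.isNoncommuting (by simp) (by simp) (by rintro rfl; exact hxd hxc)
    have hwx : Commute (x * b * c) x := ((Commute.refl x).mul_left hxb.symm).mul_left hxc.symm
    exact not_commute_of_sole_partners hQ hbc hwd hwe hwb hwc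
      (commute_mul_of_quadruple hQ hxb hxc hxd)
      (fun h => hxd ((Commute.mul_left_iff' (.refl d)).mp h))
      (fun h => hdb ((Commute.mul_left_iff hxb).mp h))
      (fun h => hdc ((Commute.mul_left_iff hxc).mp h)) (hwx.mul_right hwd)

theorem false_of_two_partners (hQ : ({b, c, d, e} : Finset G).IsMaxNoncommuting) (hbc : b ≠ c)
    (hxb : Commute x b) (hxc : Commute x c) (hxd : ¬Commute x d) (hxe : ¬Commute x e) : False := by
  obtain ⟨hwb, hwc⟩ := not_commute_mul_mul_of_not_commute hxb hxc
    (hQ.isNoncommuting (by simp) (by simp) hbc)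
  obtain ⟨f, hf, hwf⟩ := hQ.exists_commute (x * b * c)
  simp only [mem_insert, mem_singleton] at hf
  rcases hf with hf | hf | hf | hf <;> subst f
  · exact hwb hwf
  · exact hwc hwf
  · exact false_of_two_partners_of_commute_mul hQ hbc hxb hxc hxd hxe hwf
  · have hQ' : ({b, c, e, d} : Finset G).IsMaxNoncommuting := by rwa [pair_comm]
    exact false_of_two_partners_of_commute_mul hQ' hbc hxb hxc hxe hxd hwf

theorem eq_of_commute_of_card_eq_four (hB : B.IsMaxNoncommuting) (h4 : #B = 4)
    (hx : x ∉ center G) (hb : b ∈ B) (hc : c ∈ B) (hxb : Commute x b) (hxc : Commute x c) :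
    b = c := by
  by_contra hbc
  obtain ⟨d, hd, e, he, hxd, hxe, h4'⟩ := hB.exists_not_commute_card_eq_four hx hbc hxb hxc
  have hQ : {b, c, d, e} = B :=
    eq_of_subset_of_card_le (by simp [insert_subset_iff, *]) (by rw [h4, h4'])
  exact false_of_two_partners (hQ ▸ hB) hbc hxb hxc hxd hxe

theorem eq_of_commute_pair_of_card_eq_four (hB : B.IsMaxNoncommuting) (h4 : #B = 4)
    (hu : u ∉ center G) (hv : v ∉ center G) (huv : Commute u v) (ha : a ∈ B) (hb : b ∈ B)
    (hua : Commute u a) (hvb : Commute v b) : a = b := by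
  by_contra hab
  have hb' : b ∈ B.erase a := mem_erase.mpr ⟨Ne.symm hab, hb⟩
  obtain ⟨c, d, hcd, hcd'⟩ := card_eq_two.mp <| show #((B.erase a).erase b) = 2 by
    rw [card_erase_of_mem hb', card_erase_of_mem ha, h4]
  have hc : c ∈ (B.erase a).erase b := by simp [hcd']
  have hd : d ∈ (B.erase a).erase b := by simp [hcd']
  simp only [mem_erase] at hc hd
  have hQ : ({c, d, a, b} : Finset G).IsMaxNoncommuting := by
    convert hB using 1
    rw [← insert_erase ha, ← insert_erase hb', hcd']
    ext; simp only [mem_insert, mem_singleton]; tauto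
  have huniq : ∀ ⦃x y z : G⦄, x ∉ center G → y ∈ B → z ∈ B → Commute x y → Commute x z → y = z :=
    fun _ _ _ => hB.eq_of_commute_of_card_eq_four h4
  exact not_commute_of_sole_partners hQ hcd hua
    (fun h => hab (huniq hu ha hb hua h)) (fun h => hc.2.1 (huniq hu hc.2.2 ha h hua))
    (fun h => hd.2.1 (huniq hu hd.2.2 ha h hua)) hvb (fun h => hab (huniq hv ha hb h hvb))
    (fun h => hc.1 (huniq hv hc.2.2 hb h hvb)) (fun h => hd.1 (huniq hv hd.2.2 hb h hvb)) huv

theorem ncard_cent_le_of_card_le_four (hB : B.IsMaxNoncommuting) (h4 : #B ≤ 4) :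
    (Cent G).ncard ≤ #B + 1 := by
  rcases h4.lt_or_eq with h3 | h4
  · exact hB.ncard_cent_le
      (fun _ hx _ _ hb hc => hB.eq_of_commute_of_card_le_three (by omega) hx hb hc)
      (fun _ _ hu hv huv _ _ hb hc =>
        hB.eq_of_commute_pair_of_card_le_three (by omega) hu hv huv hb hc)
  · exact hB.ncard_cent_le (fun _ hx _ _ hb hc => hB.eq_of_commute_of_card_eq_four h4 hx hb hc)
      (fun _ _ hu hv huv _ _ hb hc => hB.eq_of_commute_pair_of_card_eq_four h4 hu hv huv hb hc)

end IsMaxNoncommuting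
end Finset

end

theorem stmt16 (G : Type*) [Group G] [Finite G] (h : (Cent G).ncard = 9) (r : ℕ)
    (hr : IsGreatest {n : ℕ | ∃ s : Finset G,
      (s : Set G).Pairwise (fun a b => a * b ≠ b * a) ∧ s.card = n} r) :
    5 ≤ r ∧ r ≤ 8 := by
  classical
  obtain ⟨⟨B, hBnc, rfl⟩, hmax⟩ := hr
  have hB : B.IsMaxNoncommuting := ⟨hBnc, fun s hs => hmax ⟨s, hs, rfl⟩⟩
  have h5 : 5 ≤ B.card := by
    by_contra! hlt
    have := hB.ncard_cent_le_of_card_le_four (by omega)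
    omega
  have := hB.isNoncommuting.card_lt_ncard_cent (by omega)
  omega
end
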